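/- arXiv:2512.19096 — 6 statements merged into one kernel-verified Lean document; each statement's English description precedes it below -/
import Mathlib

section
/- Let Ω be a nonempty set and let 𝒜 be a nonempty collection of subsets of Ω; set I_𝒜 := {1_B − 1 : B ∈ 𝒜}, where 1 denotes the constant gamble 1. Then 0 ∉ posi(I_𝒜) + 𝒢>0 if and only if 𝒜 has the finite intersection property, i.e. B_1 ∩ … ∩ B_n ≠ ∅ for all n ≥ 1 and all B_1, …, B_n ∈ 𝒜. In that case, setting ℱ_𝒜 := {B ⊆ Ω : ∃n ≥ 1, ∃B_1, …, B_n ∈ 𝒜, B_1 ∩ … ∩ B_n ⊆ B}, one has 𝒢≥0 ∪ (posi(I_𝒜) + 𝒢≥0) = 𝒢≥0^{ℱ_𝒜} and 𝒢>0 ∪ (posi(I_𝒜) + 𝒢>0) = 𝒢>0^{ℱ_𝒜}. -/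
open Pointwise

/-- The set of gambles on `Ω`: the bounded real-valued functions. -/
def Gmb (Ω : Type*) : Set (Ω → ℝ) := {f | ∃ M : ℝ, ∀ ω, |f ω| ≤ M}

/-- The nonnegative gambles. -/
def Gge0 (Ω : Type*) : Set (Ω → ℝ) := {f | f ∈ Gmb Ω ∧ ∀ ω, 0 ≤ f ω}

/-- The gambles uniformly bounded away from zero from below. -/
def Ggt0 (Ω : Type*) : Set (Ω → ℝ) := {f | f ∈ Gmb Ω ∧ ∃ ε > 0, ∀ ω, ε ≤ f ω}

/-- `𝒢≥0^ℱ`: the gambles that are nonnegative on some member of `ℱ`. -/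
def GgeF {Ω : Type*} (F : Set (Set Ω)) : Set (Ω → ℝ) :=
  {f | f ∈ Gmb Ω ∧ ∃ B ∈ F, ∀ ω ∈ B, 0 ≤ f ω}

/-- `𝒢>0^ℱ`: the gambles uniformly positive on some member of `ℱ`. -/
def GgtF {Ω : Type*} (F : Set (Set Ω)) : Set (Ω → ℝ) :=
  {f | f ∈ Gmb Ω ∧ ∃ B ∈ F, ∃ ε > 0, ∀ ω ∈ B, ε ≤ f ω}

/-- `posi S`: all strictly positive finite linear combinations of elements of `S`. -/
def posi {V : Type*} [AddCommGroup V] [Module ℝ V] (S : Set V) : Set V :=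
  {u | ∃ n : ℕ, 0 < n ∧ ∃ (lam : Fin n → ℝ) (w : Fin n → V),
    (∀ k, 0 < lam k) ∧ (∀ k, w k ∈ S) ∧ u = ∑ k, lam k • w k}

/-- `I_𝒜 = {1_B − 1 : B ∈ 𝒜}`. -/
def IA {Ω : Type*} (A : Set (Set Ω)) : Set (Ω → ℝ) :=
  {g | ∃ B ∈ A, g = (B.indicator fun _ => (1 : ℝ)) - 1}

/-- `ℱ_𝒜`: the smallest filter containing `𝒜`. -/
def FA {Ω : Type*} (A : Set (Set Ω)) : Set (Set Ω) :=
  {B | ∃ n : ℕ, 0 < n ∧ ∃ C : Fin n → Set Ω, (∀ k, C k ∈ A) ∧ (⋂ k, C k) ⊆ B}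

noncomputable def eB {Ω : Type*} (B : Set Ω) : Ω → ℝ := (B.indicator fun _ => (1:ℝ)) - 1

lemma eB_mem {Ω : Type*} {B : Set Ω} {ω : Ω} (h : ω ∈ B) : eB B ω = 0 := by
  simp [eB, Set.indicator_of_mem h]

lemma eB_not_mem {Ω : Type*} {B : Set Ω} {ω : Ω} (h : ω ∉ B) : eB B ω = -1 := by
  simp [eB, Set.indicator_of_notMem h]

lemma eB_nonpos {Ω : Type*} (B : Set Ω) (ω : Ω) : eB B ω ≤ 0 := by
  by_cases h : ω ∈ B
  · simp [eB_mem h]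
  · simp [eB_not_mem h]

lemma eB_abs_le {Ω : Type*} (B : Set Ω) (ω : Ω) : |eB B ω| ≤ 1 := by
  by_cases h : ω ∈ B <;> simp [eB_mem, eB_not_mem, h]

lemma sum_eval {Ω : Type*} {n : ℕ} (lam : Fin n → ℝ) (C : Fin n → Set Ω) (ω : Ω) :
    (∑ k, lam k • eB (C k)) ω = ∑ k, lam k * eB (C k) ω := by
  simp [Finset.sum_apply]

lemma key_on {Ω : Type*} {n : ℕ} (lam : Fin n → ℝ) (C : Fin n → Set Ω) {ω : Ω}
    (hω : ω ∈ ⋂ k, C k) : (∑ k, lam k • eB (C k)) ω = 0 := by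
  rw [sum_eval]
  refine Finset.sum_eq_zero fun k _ => ?_
  rw [eB_mem (Set.mem_iInter.1 hω k), mul_zero]

lemma key_abs {Ω : Type*} {n : ℕ} {lam : Fin n → ℝ} (hlam : ∀ k, 0 ≤ lam k)
    (C : Fin n → Set Ω) (ω : Ω) :
    |(∑ k, lam k • eB (C k)) ω| ≤ ∑ k, lam k := by
  rw [sum_eval]
  calc |∑ k, lam k * eB (C k) ω| ≤ ∑ k, |lam k * eB (C k) ω| :=
        Finset.abs_sum_le_sum_abs _ _
    _ ≤ ∑ k, lam k := Finset.sum_le_sum fun k _ => by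
        rw [abs_mul, abs_of_nonneg (hlam k)]
        calc lam k * |eB (C k) ω| ≤ lam k * 1 :=
              mul_le_mul_of_nonneg_left (eB_abs_le _ _) (hlam k)
          _ = lam k := mul_one _

lemma key_off {Ω : Type*} {n : ℕ} {c : ℝ} (hc : 0 ≤ c) (C : Fin n → Set Ω) {ω : Ω}
    (j : Fin n) (hj : ω ∉ C j) : (∑ k, c • eB (C k)) ω ≤ -c := by
  rw [sum_eval, ← Finset.sum_erase_add _ _ (Finset.mem_univ j)]
  have h2 : c * eB (C j) ω = -c := by rw [eB_not_mem hj]; ring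
  have h3 : ∑ k ∈ Finset.univ.erase j, c * eB (C k) ω ≤ 0 :=
    Finset.sum_nonpos fun k _ => mul_nonpos_of_nonneg_of_nonpos hc (eB_nonpos _ _)
  linarith

lemma mem_posi {Ω : Type*} {A : Set (Set Ω)} {n : ℕ} (hn : 0 < n) (lam : Fin n → ℝ)
    (hlam : ∀ k, 0 < lam k) (C : Fin n → Set Ω) (hC : ∀ k, C k ∈ A) :
    (∑ k, lam k • eB (C k)) ∈ posi (IA A) :=
  ⟨n, hn, lam, fun k => eB (C k), hlam, fun k => ⟨C k, hC k, rfl⟩, rfl⟩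

lemma posi_elim {Ω : Type*} {A : Set (Set Ω)} {g : Ω → ℝ} (hg : g ∈ posi (IA A)) :
    ∃ n : ℕ, 0 < n ∧ ∃ (lam : Fin n → ℝ) (C : Fin n → Set Ω),
      (∀ k, 0 < lam k) ∧ (∀ k, C k ∈ A) ∧ g = ∑ k, lam k • eB (C k) := by
  obtain ⟨n, hn, lam, w, hlam, hw, hsum⟩ := hg
  choose C hC hCw using hw
  exact ⟨n, hn, lam, C, hlam, hC,
    by rw [hsum]; exact Finset.sum_congr rfl fun k _ => by rw [hCw k]; rfl⟩

theorem stmt8 {Ω : Type*} [Nonempty Ω] (A : Set (Set Ω)) (hA : A.Nonempty) :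
    (((0 : Ω → ℝ) ∉ posi (IA A) + Ggt0 Ω) ↔
      (∀ n : ℕ, 0 < n → ∀ B : Fin n → Set Ω, (∀ k, B k ∈ A) → (⋂ k, B k).Nonempty)) ∧
    ((∀ n : ℕ, 0 < n → ∀ B : Fin n → Set Ω, (∀ k, B k ∈ A) → (⋂ k, B k).Nonempty) →
      Gge0 Ω ∪ (posi (IA A) + Gge0 Ω) = GgeF (FA A) ∧
      Ggt0 Ω ∪ (posi (IA A) + Ggt0 Ω) = GgtF (FA A)) := by
  constructor
  · constructor
    · -- 0 ∉ posi + Ggt0 → FIP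
      intro h0 n hn B hB
      by_contra hne
      rw [Set.not_nonempty_iff_eq_empty] at hne
      apply h0
      refine Set.mem_add.2 ⟨∑ k, (1:ℝ) • eB (B k), mem_posi hn _ (fun _ => one_pos) B hB,
        -(∑ k, (1:ℝ) • eB (B k)), ⟨⟨(n : ℝ), fun ω => ?_⟩, 1, one_pos, fun ω => ?_⟩,
        add_neg_cancel _⟩
      · rw [Pi.neg_apply, abs_neg]
        have := key_abs (fun _ : Fin n => zero_le_one) B ω
        simpa using this
      · have hj : ∃ j, ω ∉ B j := by
          by_contra hall
          push_neg at hall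
          exact (hne ▸ Set.mem_iInter.2 hall : ω ∈ (∅ : Set Ω))
        obtain ⟨j, hj⟩ := hj
        have := key_off zero_le_one B j hj
        rw [Pi.neg_apply]
        linarith
    · -- FIP → 0 ∉ posi + Ggt0
      intro hfip h0
      rw [Set.mem_add] at h0
      obtain ⟨g, hg, h, ⟨⟨M, hM⟩, ε, hε, hεh⟩, hgh⟩ := h0
      obtain ⟨n, hn, lam, C, hlam, hC, rfl⟩ := posi_elim hg
      obtain ⟨ω, hω⟩ := hfip n hn C hC
      have h1 : (∑ k, lam k • eB (C k)) ω + h ω = 0 := congrFun hgh ω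
      have h2 := key_on lam C hω
      linarith [hεh ω]
  · intro hfip
    obtain ⟨B0, hB0⟩ := hA
    have hB0F : B0 ∈ FA A := ⟨1, one_pos, fun _ => B0, fun _ => hB0, Set.iInter_subset _ 0⟩
    constructor
    · ext f
      constructor
      · rintro (⟨hfb, hf0⟩ | hmem)
        · exact ⟨hfb, B0, hB0F, fun ω _ => hf0 ω⟩
        · rw [Set.mem_add] at hmem
          obtain ⟨g, hg, h, ⟨⟨M, hM⟩, hh0⟩, rfl⟩ := hmem
          obtain ⟨n, hn, lam, C, hlam, hC, rfl⟩ := posi_elim hg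
          refine ⟨⟨∑ k, lam k + M, fun ω => ?_⟩, ⋂ k, C k, ⟨n, hn, C, hC, subset_refl _⟩,
            fun ω hω => ?_⟩
          · rw [Pi.add_apply]
            calc |(∑ k, lam k • eB (C k)) ω + h ω|
                ≤ |(∑ k, lam k • eB (C k)) ω| + |h ω| := abs_add_le _ _
              _ ≤ ∑ k, lam k + M :=
                  add_le_add (key_abs (fun k => (hlam k).le) C ω) (hM ω)
          · rw [Pi.add_apply, key_on lam C hω, zero_add]
            exact hh0 ω
      · rintro ⟨⟨M, hM⟩, B, ⟨n, hn, C, hC, hCB⟩, hfB⟩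
        right
        have hM0 : 0 ≤ M := le_trans (abs_nonneg _) (hM (Classical.arbitrary Ω))
        set c : ℝ := M + 1 with hc
        have hc0 : 0 < c := by rw [hc]; linarith
        refine Set.mem_add.2 ⟨∑ k, c • eB (C k),
          mem_posi hn (fun _ => c) (fun _ => hc0) C hC,
          f - ∑ k, c • eB (C k), ⟨⟨M + ∑ k : Fin n, c, fun ω => ?_⟩, fun ω => ?_⟩,
          by ring⟩
        · rw [Pi.sub_apply]
          calc |f ω - (∑ k, c • eB (C k)) ω|
              ≤ |f ω| + |(∑ k, c • eB (C k)) ω| := abs_sub _ _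
            _ ≤ M + ∑ k : Fin n, c := add_le_add (hM ω) (key_abs (fun _ => hc0.le) C ω)
        · rw [Pi.sub_apply]
          by_cases hω : ω ∈ ⋂ k, C k
          · rw [key_on _ C hω, sub_zero]
            exact hfB ω (hCB hω)
          · obtain ⟨j, hj⟩ : ∃ j, ω ∉ C j := by
              by_contra hall
              push_neg at hall
              exact hω (Set.mem_iInter.2 hall)
            have h1 := key_off hc0.le C j hj
            have h2 : -M ≤ f ω := (abs_le.1 (hM ω)).1
            rw [hc] at h1
            linarith
    · ext f
      constructor
      · rintro (⟨hfb, ε, hε, hf0⟩ | hmem)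
        · exact ⟨hfb, B0, hB0F, ε, hε, fun ω _ => hf0 ω⟩
        · rw [Set.mem_add] at hmem
          obtain ⟨g, hg, h, ⟨⟨M, hM⟩, ε, hε, hh0⟩, rfl⟩ := hmem
          obtain ⟨n, hn, lam, C, hlam, hC, rfl⟩ := posi_elim hg
          refine ⟨⟨∑ k, lam k + M, fun ω => ?_⟩, ⋂ k, C k, ⟨n, hn, C, hC, subset_refl _⟩,
            ε, hε, fun ω hω => ?_⟩
          · rw [Pi.add_apply]
            calc |(∑ k, lam k • eB (C k)) ω + h ω|
                ≤ |(∑ k, lam k • eB (C k)) ω| + |h ω| := abs_add_le _ _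
              _ ≤ ∑ k, lam k + M :=
                  add_le_add (key_abs (fun k => (hlam k).le) C ω) (hM ω)
          · rw [Pi.add_apply, key_on lam C hω, zero_add]
            exact hh0 ω
      · rintro ⟨⟨M, hM⟩, B, ⟨n, hn, C, hC, hCB⟩, ε, hε, hfB⟩
        right
        have hM0 : 0 ≤ M := le_trans (abs_nonneg _) (hM (Classical.arbitrary Ω))
        set c : ℝ := M + ε with hc
        have hc0 : 0 < c := by rw [hc]; linarith
        refine Set.mem_add.2 ⟨∑ k, c • eB (C k),
          mem_posi hn (fun _ => c) (fun _ => hc0) C hC,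
          f - ∑ k, c • eB (C k), ⟨⟨M + ∑ k : Fin n, c, fun ω => ?_⟩, ε, hε, fun ω => ?_⟩,
          by ring⟩
        · rw [Pi.sub_apply]
          calc |f ω - (∑ k, c • eB (C k)) ω|
              ≤ |f ω| + |(∑ k, c • eB (C k)) ω| := abs_sub _ _
            _ ≤ M + ∑ k : Fin n, c := add_le_add (hM ω) (key_abs (fun _ => hc0.le) C ω)
        · rw [Pi.sub_apply]
          by_cases hω : ω ∈ ⋂ k, C k
          · rw [key_on _ C hω, sub_zero]
            exact hfB ω (hCB hω)
          · obtain ⟨j, hj⟩ : ∃ j, ω ∉ C j := by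
              by_contra hall
              push_neg at hall
              exact hω (Set.mem_iInter.2 hall)
            have h1 := key_off hc0.le C j hj
            have h2 : -M ≤ f ω := (abs_le.1 (hM ω)).1
            rw [hc] at h1
            linarith
end

section
/- Let Ω be a nonempty set and let M_acc, M_des ⊆ 𝒢 satisfy: 𝒢≥0 ⊆ M_acc, 𝒢>0 ⊆ M_des, M_des ⊆ M_acc, 0 ∉ M_des, M_acc and M_des are convex cones (posi(C) = C), and M_acc + M_des ⊆ M_des. Then ℱ_M := {B ⊆ Ω : 1_B − 1 ∈ M_acc} is a proper filter on Ω: Ω ∈ ℱ_M, ℱ_M is closed under binary intersections, ℱ_M is closed under supersets, and ∅ ∉ ℱ_M. -/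
open Pointwise

/-- `ℱ_M`: the events `B` with `1_B − 1` acceptable. -/
def FM {Ω : Type*} (Macc : Set (Ω → ℝ)) : Set (Set Ω) :=
  {B | (B.indicator fun _ => (1 : ℝ)) - 1 ∈ Macc}

lemma posi_add {V : Type*} [AddCommGroup V] [Module ℝ V] {S : Set V} {f g : V}
    (hf : f ∈ S) (hg : g ∈ S) : f + g ∈ posi S := by
  refine ⟨2, by norm_num, ![1, 1], ![f, g], ?_, ?_, ?_⟩
  · intro k; fin_cases k <;> norm_num
  · intro k; fin_cases k <;> simpa
  · simp [Fin.sum_univ_two]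

theorem stmt9 {Ω : Type*} [Nonempty Ω] (Macc Mdes : Set (Ω → ℝ))
    (hMaccG : Macc ⊆ Gmb Ω) (hMdesG : Mdes ⊆ Gmb Ω)
    (h1 : Gge0 Ω ⊆ Macc) (h2 : Ggt0 Ω ⊆ Mdes) (h3 : Mdes ⊆ Macc)
    (h4 : (0 : Ω → ℝ) ∉ Mdes)
    (h5 : posi Macc = Macc) (h6 : posi Mdes = Mdes)
    (h7 : Macc + Mdes ⊆ Mdes) :
    (Set.univ : Set Ω) ∈ FM Macc ∧
    (∀ B₁ ∈ FM Macc, ∀ B₂ ∈ FM Macc, B₁ ∩ B₂ ∈ FM Macc) ∧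
    (∀ B₁ ∈ FM Macc, ∀ B₂ : Set Ω, B₁ ⊆ B₂ → B₂ ∈ FM Macc) ∧
    (∅ : Set Ω) ∉ FM Macc := by
  have hadd : ∀ f g : Ω → ℝ, f ∈ Macc → g ∈ Macc → f + g ∈ Macc := by
    intro f g hf hg; rw [← h5]; exact posi_add hf hg
  have hge0 : ∀ g : Ω → ℝ, (∀ ω, 0 ≤ g ω) → (∀ ω, g ω ≤ 1) → g ∈ Macc := by
    intro g hg hg1
    exact h1 ⟨⟨1, fun ω => abs_le.2 ⟨by linarith [hg ω], hg1 ω⟩⟩, hg⟩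
  refine ⟨?_, ?_, ?_, ?_⟩
  · show (Set.univ.indicator fun _ => (1 : ℝ)) - 1 ∈ Macc
    have : (Set.univ.indicator fun _ => (1 : ℝ)) - 1 = fun _ : Ω => (0 : ℝ) := by
      funext ω; simp
    rw [this]
    exact hge0 _ (fun _ => le_refl 0) (fun _ => by norm_num)
  · intro B₁ hB₁ B₂ hB₂
    show ((B₁ ∩ B₂).indicator fun _ => (1 : ℝ)) - 1 ∈ Macc
    set f := (B₁.indicator fun _ => (1 : ℝ)) - 1 with hf
    set g := (B₂.indicator fun _ => (1 : ℝ)) - 1 with hg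
    set h := ((B₁ ∩ B₂).indicator fun _ => (1 : ℝ)) - 1 - (f + g) with hh
    have hmem : h ∈ Macc := by
      apply hge0
      · intro ω
        simp only [hh, hf, hg, Pi.sub_apply, Pi.add_apply, Pi.one_apply]
        by_cases h1ω : ω ∈ B₁ <;> by_cases h2ω : ω ∈ B₂ <;>
          simp [Set.indicator_apply, h1ω, h2ω]
      · intro ω
        simp only [hh, hf, hg, Pi.sub_apply, Pi.add_apply, Pi.one_apply]
        by_cases h1ω : ω ∈ B₁ <;> by_cases h2ω : ω ∈ B₂ <;>
          simp [Set.indicator_apply, h1ω, h2ω]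
    have := hadd _ _ (hadd _ _ hB₁ hB₂) hmem
    have heq : f + g + h = ((B₁ ∩ B₂).indicator fun _ => (1 : ℝ)) - 1 := by
      simp [hh]
    rwa [heq] at this
  · intro B₁ hB₁ B₂ hsub
    show (B₂.indicator fun _ => (1 : ℝ)) - 1 ∈ Macc
    set f := (B₁.indicator fun _ => (1 : ℝ)) - 1 with hf
    set h := (B₂.indicator fun _ => (1 : ℝ)) - 1 - f with hh
    have hmem : h ∈ Macc := by
      apply hge0
      · intro ω
        simp only [hh, hf, Pi.sub_apply, Pi.one_apply]
        by_cases h1ω : ω ∈ B₁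
        · simp [Set.indicator_apply, h1ω, hsub h1ω]
        · by_cases h2ω : ω ∈ B₂ <;> simp [Set.indicator_apply, h1ω, h2ω]
      · intro ω
        simp only [hh, hf, Pi.sub_apply, Pi.one_apply]
        by_cases h1ω : ω ∈ B₁ <;> by_cases h2ω : ω ∈ B₂ <;>
          simp [Set.indicator_apply, h1ω, h2ω]
    have := hadd _ _ hB₁ hmem
    have heq : f + h = (B₂.indicator fun _ => (1 : ℝ)) - 1 := by simp [hh]
    rwa [heq] at this
  · intro hemp
    have hneg1 : (fun _ : Ω => (-1 : ℝ)) ∈ Macc := by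
      have : ((∅ : Set Ω).indicator fun _ => (1 : ℝ)) - 1 = fun _ : Ω => (-1 : ℝ) := by
        funext ω; simp
      have hemp' : ((∅ : Set Ω).indicator fun _ => (1 : ℝ)) - 1 ∈ Macc := hemp
      rwa [this] at hemp'
    have h1mem : (fun _ : Ω => (1 : ℝ)) ∈ Mdes :=
      h2 ⟨⟨1, fun ω => by norm_num⟩, 1, one_pos, fun ω => le_refl 1⟩
    have : (0 : Ω → ℝ) ∈ Mdes := by
      have := h7 (Set.add_mem_add hneg1 h1mem)
      have heq : (fun _ : Ω => (-1 : ℝ)) + (fun _ : Ω => (1 : ℝ)) = (0 : Ω → ℝ) := by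
        funext ω; simp
      rwa [heq] at this
    exact h4 this
end

section
/- Let Ω be a nonempty set, let ℱ be a proper filter on Ω, and let E ⊆ Ω be nonempty. Then 0 ∉ (𝒢≥0^ℱ⦀E) + 𝒢>0 if and only if B ∩ E ≠ ∅ for every B ∈ ℱ. -/
open Pointwise

/-- `K⦀E`: the gambles whose called-off version `1_E·f` lies in `K`. -/
def condon {Ω : Type*} (K : Set (Ω → ℝ)) (E : Set Ω) : Set (Ω → ℝ) :=
  {f | f ∈ Gmb Ω ∧ E.indicator f ∈ K}

theorem stmt12 {Ω : Type*} [Nonempty Ω] (F : Set (Set Ω))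
    (hne : F.Nonempty)
    (hinter : ∀ A ∈ F, ∀ B ∈ F, A ∩ B ∈ F)
    (hsup : ∀ A ∈ F, ∀ B : Set Ω, A ⊆ B → B ∈ F)
    (hproper : (∅ : Set Ω) ∉ F)
    (E : Set Ω) (hE : E.Nonempty) :
    (0 : Ω → ℝ) ∉ condon (GgeF F) E + Ggt0 Ω ↔ ∀ B ∈ F, (B ∩ E).Nonempty := by
  constructor
  · intro h B hB
    by_contra hempty
    rw [Set.not_nonempty_iff_eq_empty] at hempty
    apply h
    rw [Set.mem_add]
    refine ⟨fun _ => -1, ⟨⟨1, fun ω => by norm_num⟩, ⟨1, fun ω => ?_⟩, B, hB, fun ω hω => ?_⟩,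
      fun _ => 1, ⟨⟨1, fun ω => by norm_num⟩, 1, one_pos, fun ω => le_refl 1⟩, ?_⟩
    · by_cases hω : ω ∈ E <;> simp [Set.indicator, hω]
    · have hωE : ω ∉ E := fun hωE => Set.eq_empty_iff_forall_notMem.mp hempty ω ⟨hω, hωE⟩
      simp [Set.indicator, hωE]
    · funext ω; norm_num
  · intro h hmem
    rw [Set.mem_add] at hmem
    obtain ⟨f, ⟨hfGmb, _, ⟨B, hB, hpos⟩⟩, g, ⟨hgGmb, ε, hε, hg⟩, hfg⟩ := hmem
    obtain ⟨ω, hωB, hωE⟩ := h B hB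
    have h1 : 0 ≤ E.indicator f ω := hpos ω hωB
    rw [Set.indicator_of_mem hωE] at h1
    have h2 : f ω + g ω = 0 := congrFun hfg ω
    have := hg ω
    linarith
end

section
/- Let Ω be a nonempty set, let ℱ be a proper filter on Ω, and let E ⊆ Ω be nonempty with B ∩ E ≠ ∅ for every B ∈ ℱ. Set ℱ' := {B ⊆ Ω : ∃D ∈ ℱ, D ∩ E ⊆ B}. Then 𝒢≥0^ℱ⦀E = 𝒢≥0^{ℱ'} and (𝒢>0^ℱ⦀E) ∪ (𝒢>0 + (𝒢≥0^ℱ⦀E)) = 𝒢>0^{ℱ'}; that is, the conditioning-based revision of the propositional AD-model associated with ℱ by the event E is the propositional AD-model associated with ℱ'. -/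
open Pointwise

lemma indicator_Gmb {Ω : Type*} {E : Set Ω} {f : Ω → ℝ} (hf : f ∈ Gmb Ω) :
    E.indicator f ∈ Gmb Ω := by
  obtain ⟨M, hM⟩ := hf
  refine ⟨max M 0, fun ω => ?_⟩
  by_cases h : ω ∈ E
  · simp [Set.indicator_of_mem h]; exact Or.inl (hM ω)
  · simp [Set.indicator_of_notMem h]

theorem stmt13 {Ω : Type*} [Nonempty Ω] (F : Set (Set Ω))
    (hne : F.Nonempty)
    (hinter : ∀ A ∈ F, ∀ B ∈ F, A ∩ B ∈ F)
    (hsup : ∀ A ∈ F, ∀ B : Set Ω, A ⊆ B → B ∈ F)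
    (hproper : (∅ : Set Ω) ∉ F)
    (E : Set Ω) (hE : E.Nonempty)
    (hcons : ∀ B ∈ F, (B ∩ E).Nonempty)
    (F' : Set (Set Ω)) (hF' : F' = {B : Set Ω | ∃ D ∈ F, D ∩ E ⊆ B}) :
    condon (GgeF F) E = GgeF F' ∧
    condon (GgtF F) E ∪ (Ggt0 Ω + condon (GgeF F) E) = GgtF F' := by
  subst hF'
  constructor
  · ext f
    constructor
    · rintro ⟨hf, _, B, hB, hpos⟩
      exact ⟨hf, B ∩ E, ⟨B, hB, subset_rfl⟩, fun ω ⟨hωB, hωE⟩ => by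
        have := hpos ω hωB
        rwa [Set.indicator_of_mem hωE] at this⟩
    · rintro ⟨hf, B', ⟨D, hD, hDE⟩, hpos⟩
      refine ⟨hf, indicator_Gmb hf, D, hD, fun ω hωD => ?_⟩
      by_cases h : ω ∈ E
      · rw [Set.indicator_of_mem h]; exact hpos ω (hDE ⟨hωD, h⟩)
      · rw [Set.indicator_of_notMem h]
  · ext f
    constructor
    · rintro (⟨hf, _, B, hB, ε, hε, hpos⟩ | hf)
      · refine ⟨hf, B ∩ E, ⟨B, hB, subset_rfl⟩, ε, hε, fun ω ⟨hωB, hωE⟩ => ?_⟩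
        have := hpos ω hωB
        rwa [Set.indicator_of_mem hωE] at this
      · obtain ⟨g, ⟨⟨Mg, hMg⟩, ε, hε, hgε⟩, h, ⟨⟨Mh, hMh⟩, _, B, hB, hpos⟩, hsum⟩ := hf
        refine ⟨⟨Mg + Mh, fun ω => ?_⟩, B ∩ E, ⟨B, hB, subset_rfl⟩, ε, hε,
          fun ω ⟨hωB, hωE⟩ => ?_⟩
        · rw [← hsum]
          calc |g ω + h ω| ≤ |g ω| + |h ω| := abs_add_le _ _
            _ ≤ Mg + Mh := add_le_add (hMg ω) (hMh ω)
        · have hh := hpos ω hωB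
          rw [Set.indicator_of_mem hωE] at hh
          have := hgε ω
          rw [← hsum]; simp only [Pi.add_apply]; linarith
    · rintro ⟨hf, B', ⟨D, hD, hDE⟩, ε, hε, hpos⟩
      right
      refine Set.mem_add.mpr ⟨fun _ => ε, ⟨⟨ε, fun ω => by rw [abs_of_pos hε]⟩,
        ε, hε, fun ω => le_refl ε⟩, fun ω => f ω - ε, ⟨?_, ?_, D, hD, fun ω hωD => ?_⟩, ?_⟩
      · obtain ⟨M, hM⟩ := hf
        exact ⟨M + ε, fun ω => by
          calc |f ω - ε| ≤ |f ω| + |ε| := abs_sub _ _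
            _ ≤ M + ε := add_le_add (hM ω) (le_of_eq (abs_of_pos hε))⟩
      · exact indicator_Gmb (by
          obtain ⟨M, hM⟩ := hf
          exact ⟨M + ε, fun ω => by
            calc |f ω - ε| ≤ |f ω| + |ε| := abs_sub _ _
              _ ≤ M + ε := add_le_add (hM ω) (le_of_eq (abs_of_pos hε))⟩)
      · by_cases h : ω ∈ E
        · rw [Set.indicator_of_mem h]
          have := hpos ω (hDE ⟨hωD, h⟩); linarith
        · rw [Set.indicator_of_notMem h]
      · funext ω; simp
end

section
/- Let Ω be a nonempty set and let P be a coherent full conditional prevision on Ω. Then every element of posi(L_P) pointwise dominates some element of L_P: for every g ∈ posi(L_P) there exist a nonempty B ⊆ Ω, a gamble h and a real ε > 0 such that g(ω) ≥ 1_B(ω)·(h(ω) − P(h|B) + ε) for all ω ∈ Ω. Consequently, posi(L_P) + 𝒢≥0 = L_P + 𝒢≥0. -/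
open Pointwise

/-- `L_P`: the called-off gambles `1_B·(f − P(f|B) + ε)`. -/
def LP {Ω : Type*} (P : (Ω → ℝ) → Set Ω → ℝ) : Set (Ω → ℝ) :=
  {g | ∃ f ∈ Gmb Ω, ∃ B : Set Ω, B.Nonempty ∧ ∃ ε : ℝ, 0 < ε ∧
    g = B.indicator fun ω => f ω - P f B + ε}


/-!
Write `g = ∑ λₖ 1_{Bₖ}(fₖ − P(fₖ|Bₖ) + εₖ)` and `B = ⋃ Bₖ`. Then `g` vanishes off `B`, so
`g = 1_B (g − P(g|B) + P(g|B))`, and it remains to see that `P(g|B) > 0`. By Bayes' rule each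
summand has conditional prevision `λₖ εₖ P(Bₖ|B)`, and these probabilities are nonnegative with
`∑ P(Bₖ|B) ≥ 1` because the `Bₖ` cover `B`. Hence `posi(L_P) = L_P`.
-/

open Function

lemma subset_posi {V : Type*} [AddCommGroup V] [Module ℝ V] (S : Set V) : S ⊆ posi S :=
  fun v hv => ⟨1, one_pos, fun _ => 1, fun _ => v, fun _ => one_pos, fun _ => hv, by simp⟩

def gambles (Ω : Type*) : Submodule ℝ (Ω → ℝ) where
  carrier := Gmb Ω
  zero_mem' := ⟨0, by simp⟩
  add_mem' := by
    rintro f g ⟨M, hM⟩ ⟨N, hN⟩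
    exact ⟨M + N, fun ω => (abs_add_le _ _).trans (add_le_add (hM ω) (hN ω))⟩
  smul_mem' := by
    rintro c f ⟨M, hM⟩
    exact ⟨|c| * M, fun ω => by
      simpa [abs_mul] using mul_le_mul_of_nonneg_left (hM ω) (abs_nonneg c)⟩

section

variable {Ω : Type*}

lemma const_mem_Gmb (c : ℝ) : (fun _ : Ω => c) ∈ Gmb Ω := ⟨|c|, fun _ => le_rfl⟩

lemma indicator_mem_Gmb (B : Set Ω) {f : Ω → ℝ} (hf : f ∈ Gmb Ω) : B.indicator f ∈ Gmb Ω := by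
  obtain ⟨M, hM⟩ := hf
  refine ⟨M, fun ω => le_trans ?_ (hM ω)⟩
  by_cases hω : ω ∈ B <;> simp [hω]

/-! Axioms (CC1), (CC2) and (CC3) of a coherent full conditional prevision, in that order. -/

def BoundedByRange (P : (Ω → ℝ) → Set Ω → ℝ) : Prop :=
  ∀ f ∈ Gmb Ω, ∀ B : Set Ω, B.Nonempty → sInf (f '' B) ≤ P f B ∧ P f B ≤ sSup (f '' B)

def LinearOnGambles (P : (Ω → ℝ) → Set Ω → ℝ) : Prop :=
  ∀ f ∈ Gmb Ω, ∀ g ∈ Gmb Ω, ∀ B : Set Ω, B.Nonempty → ∀ lam mu : ℝ,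
    P (lam • f + mu • g) B = lam * P f B + mu * P g B

def BayesRule (P : (Ω → ℝ) → Set Ω → ℝ) : Prop :=
  ∀ f ∈ Gmb Ω, ∀ B C : Set Ω, (B ∩ C).Nonempty →
    P (C.indicator f) B = P f (B ∩ C) * P (C.indicator fun _ => (1 : ℝ)) B

variable {P : (Ω → ℝ) → Set Ω → ℝ} {B : Set Ω}

lemma mem_Gmb_of_mem_LP {g : Ω → ℝ} (hg : g ∈ LP P) : g ∈ Gmb Ω := by
  obtain ⟨f, hf, B, -, ε, -, rfl⟩ := hg
  exact indicator_mem_Gmb B <|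
    (gambles Ω).add_mem ((gambles Ω).sub_mem hf (const_mem_Gmb _)) (const_mem_Gmb ε)

lemma mem_LP_of_indicator_eq_self {g : Ω → ℝ}
    (hg : g ∈ Gmb Ω) (hB : B.Nonempty) (hgB : B.indicator g = g) (hpos : 0 < P g B) :
    g ∈ LP P :=
  ⟨g, hg, B, hB, P g B, hpos, by simpa using hgB.symm⟩

lemma BoundedByRange.le_of_forall_le (hP : BoundedByRange P) (hB : B.Nonempty)
    {f : Ω → ℝ} (hf : f ∈ Gmb Ω) {c : ℝ} (hc : ∀ ω ∈ B, c ≤ f ω) : c ≤ P f B :=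
  (le_csInf (hB.image f) (by rintro _ ⟨ω, hω, rfl⟩; exact hc ω hω)).trans (hP f hf B hB).1

lemma LinearOnGambles.sum (hP : LinearOnGambles P) (hB : B.Nonempty) {ι : Type*}
    (s : Finset ι) (c : ι → ℝ) {w : ι → Ω → ℝ} (hw : ∀ i ∈ s, w i ∈ Gmb Ω) :
    P (∑ i ∈ s, c i • w i) B = ∑ i ∈ s, c i * P (w i) B := by
  induction s using Finset.cons_induction with
  | empty => simpa using hP 0 (gambles Ω).zero_mem 0 (gambles Ω).zero_mem B hB 0 0
  | cons a s ha ih =>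
    have hrest : ∑ i ∈ s, c i • w i ∈ Gmb Ω :=
      (gambles Ω).sum_mem fun i hi => (gambles Ω).smul_mem _ (hw i (Finset.mem_cons_of_mem hi))
    rw [Finset.sum_cons, Finset.sum_cons, ← ih fun i hi => hw i (Finset.mem_cons_of_mem hi),
      ← one_mul (P (∑ i ∈ s, c i • w i) B), ← hP _ (hw a (Finset.mem_cons_self a s)) _ hrest B hB,
      one_smul]

lemma one_le_sum_prevision_indicator (h1 : BoundedByRange P) (h2 : LinearOnGambles P)
    (hB : B.Nonempty) {ι : Type*} (s : Finset ι) (C : ι → Set Ω) (hBC : B ⊆ ⋃ i ∈ s, C i) :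
    1 ≤ ∑ i ∈ s, P ((C i).indicator fun _ => 1) B := by
  have hI : ∀ i ∈ s, (C i).indicator (fun _ => (1 : ℝ)) ∈ Gmb Ω :=
    fun i _ => indicator_mem_Gmb _ (const_mem_Gmb 1)
  have hsum := h2.sum hB s (fun _ => 1) hI
  simp only [one_smul, one_mul] at hsum
  rw [← hsum]
  refine h1.le_of_forall_le hB ((gambles Ω).sum_mem hI) fun ω hω => ?_
  obtain ⟨j, hj, hωj⟩ := Set.mem_iUnion₂.1 (hBC hω)
  rw [Finset.sum_apply]
  calc (1 : ℝ) = (C j).indicator (fun _ => 1) ω :=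
        (Set.indicator_of_mem hωj (fun _ => (1 : ℝ))).symm
    _ ≤ ∑ i ∈ s, (C i).indicator (fun _ => (1 : ℝ)) ω :=
      Finset.single_le_sum (fun i _ => Set.indicator_nonneg (fun _ _ => zero_le_one) ω) hj

lemma prevision_calledOff (h2 : LinearOnGambles P) (h3 : BayesRule P) (hB : B.Nonempty)
    {C : Set Ω} (hC : C.Nonempty) (hCB : C ⊆ B) {f : Ω → ℝ} (hf : f ∈ Gmb Ω) (ε : ℝ) :
    P (C.indicator fun ω => f ω - P f C + ε) B = ε * P (C.indicator fun _ => 1) B := by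
  have hBC : B ∩ C = C := Set.inter_eq_right.2 hCB
  have hsplit : (C.indicator fun ω => f ω - P f C + ε) =
      (1 : ℝ) • C.indicator f + (ε - P f C) • C.indicator fun _ => 1 := by
    funext ω
    by_cases hω : ω ∈ C <;> simp [hω]
    ring
  have hbayes := h3 f hf B C (by rwa [hBC])
  rw [hBC] at hbayes
  rw [hsplit, h2 _ (indicator_mem_Gmb C hf) _ (indicator_mem_Gmb C (const_mem_Gmb 1)) B hB,
    hbayes]
  ring

lemma sum_mul_pos {R ι : Type*} [Ring R] [LinearOrder R] [IsStrictOrderedRing R]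
    {s : Finset ι} {a b : ι → R} (ha : ∀ i ∈ s, 0 < a i)
    (hb : ∀ i ∈ s, 0 ≤ b i) (hsum : 0 < ∑ i ∈ s, b i) : 0 < ∑ i ∈ s, a i * b i := by
  obtain ⟨j, hj, hbj⟩ := Finset.exists_lt_of_sum_lt (f := fun _ => (0 : R)) (by simpa using hsum)
  exact Finset.sum_pos' (fun i hi => mul_nonneg (ha i hi).le (hb i hi))
    ⟨j, hj, mul_pos (ha j hj) hbj⟩

theorem posi_LP_subset_LP (h1 : BoundedByRange P) (h2 : LinearOnGambles P) (h3 : BayesRule P) :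
    posi (LP P) ⊆ LP P := by
  rintro g ⟨n, hn, c, w, hc, hw, rfl⟩
  have hwG : ∀ k, w k ∈ Gmb Ω := fun k => mem_Gmb_of_mem_LP (hw k)
  choose f hf C hC ε hε hwC using hw
  have hCB : ∀ k, C k ⊆ ⋃ k, C k := Set.subset_iUnion C
  have hB : (⋃ k, C k).Nonempty := (hC ⟨0, hn⟩).mono (hCB _)
  have hp : ∀ k, 0 ≤ P ((C k).indicator fun _ => 1) (⋃ k, C k) := fun k =>
    h1.le_of_forall_le hB (indicator_mem_Gmb _ (const_mem_Gmb 1))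
      fun ω _ => Set.indicator_nonneg (fun _ _ => zero_le_one) ω
  refine mem_LP_of_indicator_eq_self
    ((gambles Ω).sum_mem fun k _ => (gambles Ω).smul_mem _ (hwG k)) hB ?_ ?_
  · refine Set.indicator_eq_self.2 (support_subset_iff'.2 fun ω hω => ?_)
    simp [hwC, Set.indicator_of_notMem (fun h => hω (hCB _ h))]
  · rw [h2.sum hB _ c fun k _ => hwG k]
    simp_rw [hwC, prevision_calledOff h2 h3 hB (hC _) (hCB _) (hf _), ← mul_assoc]
    exact sum_mul_pos (fun k _ => mul_pos (hc k) (hε k)) (fun k _ => hp k)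
      (one_pos.trans_le (one_le_sum_prevision_indicator h1 h2 hB _ C (by simp)))

theorem posi_LP_eq_LP (h1 : BoundedByRange P) (h2 : LinearOnGambles P) (h3 : BayesRule P) :
    posi (LP P) = LP P :=
  (posi_LP_subset_LP h1 h2 h3).antisymm (subset_posi _)

end

theorem stmt16_general {Ω : Type*} (P : (Ω → ℝ) → Set Ω → ℝ)
    (hCC1 : ∀ f ∈ Gmb Ω, ∀ B : Set Ω, B.Nonempty →
      sInf (f '' B) ≤ P f B ∧ P f B ≤ sSup (f '' B))
    (hCC2 : ∀ f ∈ Gmb Ω, ∀ g ∈ Gmb Ω, ∀ B : Set Ω, B.Nonempty → ∀ lam mu : ℝ,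
      P (lam • f + mu • g) B = lam * P f B + mu * P g B)
    (hCC3 : ∀ f ∈ Gmb Ω, ∀ B C : Set Ω, (B ∩ C).Nonempty →
      P (C.indicator f) B = P f (B ∩ C) * P (C.indicator fun _ => (1 : ℝ)) B) :
    (∀ g ∈ posi (LP P), ∃ B : Set Ω, B.Nonempty ∧ ∃ h ∈ Gmb Ω, ∃ ε : ℝ, 0 < ε ∧
      ∀ ω, B.indicator (fun ω' => h ω' - P h B + ε) ω ≤ g ω) ∧
    posi (LP P) + Gge0 Ω = LP P + Gge0 Ω := by
  have hposi := posi_LP_eq_LP hCC1 hCC2 hCC3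
  refine ⟨fun g hg => ?_, by rw [hposi]⟩
  obtain ⟨h, hh, B, hB, ε, hε, rfl⟩ := hposi ▸ hg
  exact ⟨B, hB, h, hh, ε, hε, fun _ => le_rfl⟩

theorem stmt16 {Ω : Type*} [Nonempty Ω] (P : (Ω → ℝ) → Set Ω → ℝ)
    (hCC1 : ∀ f ∈ Gmb Ω, ∀ B : Set Ω, B.Nonempty →
      sInf (f '' B) ≤ P f B ∧ P f B ≤ sSup (f '' B))
    (hCC2 : ∀ f ∈ Gmb Ω, ∀ g ∈ Gmb Ω, ∀ B : Set Ω, B.Nonempty → ∀ lam mu : ℝ,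
      P (lam • f + mu • g) B = lam * P f B + mu * P g B)
    (hCC3 : ∀ f ∈ Gmb Ω, ∀ B C : Set Ω, (B ∩ C).Nonempty →
      P (C.indicator f) B = P f (B ∩ C) * P (C.indicator fun _ => (1 : ℝ)) B) :
    (∀ g ∈ posi (LP P), ∃ B : Set Ω, B.Nonempty ∧ ∃ h ∈ Gmb Ω, ∃ ε : ℝ, 0 < ε ∧
      ∀ ω, B.indicator (fun ω' => h ω' - P h B + ε) ω ≤ g ω) ∧
    posi (LP P) + Gge0 Ω = LP P + Gge0 Ω :=
  stmt16_general P hCC1 hCC2 hCC3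
end

section
/- Let Ω be a nonempty set and let P be a coherent full conditional prevision on Ω that avoids sure loss. Define M_acc := 𝒢≥0 ∪ (posi(L_P) + 𝒢≥0). Then for every gamble f and every nonempty B ⊆ Ω: sup{α ∈ ℝ : 1_B·(f − α) ∈ M_acc} = P(f|B) = inf{β ∈ ℝ : 1_B·(β − f) ∈ M_acc}, where 1_B·(f − α) denotes the gamble ω ↦ 1_B(ω)·(f(ω) − α). -/
open Pointwise

lemma posi_mem {V : Type*} [AddCommGroup V] [Module ℝ V] {S : Set V} {t : V}
    (ht : t ∈ S) : t ∈ posi S := by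
  refine ⟨1, one_pos, fun _ => 1, fun _ => t, fun _ => one_pos, fun _ => ht, ?_⟩
  simp

lemma posi_add_mem {V : Type*} [AddCommGroup V] [Module ℝ V] {S : Set V} {u t : V}
    (hu : u ∈ posi S) (ht : t ∈ S) : u + t ∈ posi S := by
  obtain ⟨n, hn, lam, w, hlam, hw, rfl⟩ := hu
  refine ⟨n + 1, Nat.succ_pos _, Fin.snoc lam 1, Fin.snoc w t, ?_, ?_, ?_⟩
  · intro k
    induction k using Fin.lastCases with
    | last => simp
    | cast i => simpa using hlam i
  · intro k
    induction k using Fin.lastCases with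
    | last => simpa using ht
    | cast i => simpa using hw i
  · rw [Fin.sum_univ_castSucc]
    simp

/-- Key consequence of avoiding sure loss: any element of `posi (LP P)` is
somewhere strictly positive. -/
lemma posi_LP_pos {Ω : Type*} (P : (Ω → ℝ) → Set Ω → ℝ)
    (hASL : ∀ n : ℕ, 0 < n → ∀ (lam eps : Fin n → ℝ) (f : Fin n → (Ω → ℝ))
        (B : Fin n → Set Ω),
      (∀ k, 0 < lam k) → (∀ k, 0 < eps k) → (∀ k, f k ∈ Gmb Ω) →
      (∀ k, (B k).Nonempty) →
      0 ≤ sSup {x : ℝ | ∃ ω ∈ ⋃ k, B k,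
        x = ∑ k, lam k * (B k).indicator (fun _ => (1 : ℝ)) ω *
          (f k ω - P (f k) (B k) + eps k)})
    {u : Ω → ℝ} (hu : u ∈ posi (LP P)) : ∃ ω, 0 < u ω := by
  by_contra hcon
  push_neg at hcon
  obtain ⟨n, hn, lam, w, hlam, hw, hu⟩ := hu
  choose f hf B hB eps heps hwe using hw
  have huniv : (Finset.univ : Finset (Fin n)).Nonempty := ⟨⟨0, hn⟩, Finset.mem_univ _⟩
  set c : ℝ := Finset.univ.inf' huniv (fun k => lam k * (eps k / 2)) with hc
  have hcpos : 0 < c := by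
    rw [hc, Finset.lt_inf'_iff]
    intro k _
    have := hlam k
    have := heps k
    positivity
  have hA := hASL n hn lam (fun k => eps k / 2) f B hlam
    (fun k => by have := heps k; positivity) hf hB
  set T := {x : ℝ | ∃ ω ∈ ⋃ k, B k,
        x = ∑ k, lam k * (B k).indicator (fun _ => (1 : ℝ)) ω *
          (f k ω - P (f k) (B k) + eps k / 2)} with hT
  -- pointwise identity for each term
  have hterm : ∀ (k : Fin n) (ω : Ω),
      lam k * (B k).indicator (fun _ => (1 : ℝ)) ω * (f k ω - P (f k) (B k) + eps k / 2)
      = lam k * w k ω - lam k * (eps k / 2) * (B k).indicator (fun _ => (1 : ℝ)) ω := by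
    intro k ω
    rw [hwe k]
    by_cases hm : ω ∈ B k
    · simp [Set.indicator_of_mem hm]
      ring
    · simp [Set.indicator_of_notMem hm]
  have hsum : ∀ ω : Ω,
      (∑ k, lam k * (B k).indicator (fun _ => (1 : ℝ)) ω *
          (f k ω - P (f k) (B k) + eps k / 2))
      = u ω - ∑ k, lam k * (eps k / 2) * (B k).indicator (fun _ => (1 : ℝ)) ω := by
    intro ω
    have : u ω = ∑ k, lam k * w k ω := by
      rw [hu]
      simp [Finset.sum_apply]
    rw [this, ← Finset.sum_sub_distrib]
    exact Finset.sum_congr rfl fun k _ => hterm k ω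
  have hub : ∀ x ∈ T, x ≤ -c := by
    rintro x ⟨ω, hω, rfl⟩
    rw [hsum ω]
    obtain ⟨k0, hk0⟩ := Set.mem_iUnion.mp hω
    have hD : c ≤ ∑ k, lam k * (eps k / 2) * (B k).indicator (fun _ => (1 : ℝ)) ω := by
      have h1 : c ≤ lam k0 * (eps k0 / 2) * (B k0).indicator (fun _ => (1 : ℝ)) ω := by
        rw [Set.indicator_of_mem hk0, mul_one]
        exact Finset.inf'_le _ (Finset.mem_univ k0)
      refine h1.trans (Finset.single_le_sum
        (f := fun k => lam k * (eps k / 2) * (B k).indicator (fun _ => (1 : ℝ)) ω)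
        (fun k _ => ?_) (Finset.mem_univ k0))
      have h2 := (hlam k).le
      have h3 := (heps k).le
      have h4 : (0:ℝ) ≤ (B k).indicator (fun _ => (1 : ℝ)) ω :=
        Set.indicator_nonneg (fun _ _ => zero_le_one) ω
      positivity
    have := hcon ω
    linarith
  have hTne : T.Nonempty := by
    obtain ⟨ω0, hω0⟩ := hB ⟨0, hn⟩
    exact ⟨_, ⟨ω0, Set.mem_iUnion.mpr ⟨⟨0, hn⟩, hω0⟩, rfl⟩⟩
  have := csSup_le hTne hub
  linarith

lemma sSup_eq_of (S : Set ℝ) (p : ℝ) (h1 : ∀ α, α < p → α ∈ S) (h2 : ∀ α ∈ S, α ≤ p) :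
    sSup S = p := by
  have hne : S.Nonempty := ⟨p - 1, h1 _ (by linarith)⟩
  have hbdd : BddAbove S := ⟨p, h2⟩
  refine le_antisymm (csSup_le hne h2) (le_of_forall_lt fun c hc => ?_)
  have hm : (c + p) / 2 ∈ S := h1 _ (by linarith)
  exact lt_of_lt_of_le (by linarith) (le_csSup hbdd hm)

lemma sInf_eq_of (S : Set ℝ) (p : ℝ) (h1 : ∀ β, p < β → β ∈ S) (h2 : ∀ β ∈ S, p ≤ β) :
    sInf S = p := by
  have hne : S.Nonempty := ⟨p + 1, h1 _ (by linarith)⟩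
  have hbdd : BddBelow S := ⟨p, h2⟩
  refine le_antisymm ?_ (le_csInf hne h2)
  by_contra h
  push_neg at h
  have hm : (p + sInf S) / 2 ∈ S := h1 _ (by linarith)
  have := csInf_le hbdd hm
  linarith

theorem stmt17 {Ω : Type*} [Nonempty Ω] (P : (Ω → ℝ) → Set Ω → ℝ)
    (hCC1 : ∀ f ∈ Gmb Ω, ∀ B : Set Ω, B.Nonempty →
      sInf (f '' B) ≤ P f B ∧ P f B ≤ sSup (f '' B))
    (hCC2 : ∀ f ∈ Gmb Ω, ∀ g ∈ Gmb Ω, ∀ B : Set Ω, B.Nonempty → ∀ lam mu : ℝ,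
      P (lam • f + mu • g) B = lam * P f B + mu * P g B)
    (hCC3 : ∀ f ∈ Gmb Ω, ∀ B C : Set Ω, (B ∩ C).Nonempty →
      P (C.indicator f) B = P f (B ∩ C) * P (C.indicator fun _ => (1 : ℝ)) B)
    (hASL : ∀ n : ℕ, 0 < n → ∀ (lam eps : Fin n → ℝ) (f : Fin n → (Ω → ℝ))
        (B : Fin n → Set Ω),
      (∀ k, 0 < lam k) → (∀ k, 0 < eps k) → (∀ k, f k ∈ Gmb Ω) →
      (∀ k, (B k).Nonempty) →
      0 ≤ sSup {x : ℝ | ∃ ω ∈ ⋃ k, B k,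
        x = ∑ k, lam k * (B k).indicator (fun _ => (1 : ℝ)) ω *
          (f k ω - P (f k) (B k) + eps k)})
    (Macc : Set (Ω → ℝ)) (hMacc : Macc = Gge0 Ω ∪ (posi (LP P) + Gge0 Ω)) :
    ∀ f ∈ Gmb Ω, ∀ B : Set Ω, B.Nonempty →
      sSup {α : ℝ | (B.indicator fun ω => f ω - α) ∈ Macc} = P f B ∧
      P f B = sInf {β : ℝ | (B.indicator fun ω => β - f ω) ∈ Macc} := by
  intro f hf B hB
  -- constants have prevision equal to themselves
  have hPconst : ∀ c : ℝ, P (fun _ => c) B = c := by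
    intro c
    have hc := hCC1 (fun _ => c) ⟨|c|, fun ω => le_refl _⟩ B hB
    rw [hB.image_const, csInf_singleton, csSup_singleton] at hc
    exact le_antisymm hc.2 hc.1
  -- linearity consequence
  have hPlin : ∀ a : ℝ, P (fun ω => a - f ω) B = a - P f B := by
    intro a
    have h1 : (fun _ => (1 : ℝ)) ∈ Gmb Ω := ⟨1, fun ω => by simp⟩
    have h2 := hCC2 (fun _ => (1 : ℝ)) h1 f hf B hB a (-1)
    have heq : (a • (fun _ => (1 : ℝ)) + (-1 : ℝ) • f) = fun ω => a - f ω := by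
      funext ω
      simp [smul_eq_mul]
      ring
    rw [heq] at h2
    rw [h2, hPconst 1]
    ring
  have hGmb_sub : ∀ a : ℝ, (fun ω => a - f ω) ∈ Gmb Ω := by
    intro a
    obtain ⟨M, hM⟩ := hf
    refine ⟨|a| + M, fun ω => ?_⟩
    have h1 : |a - f ω| ≤ |a| + |f ω| := by
      rw [sub_eq_add_neg]
      exact (abs_add_le _ _).trans (by rw [abs_neg])
    have := hM ω
    linarith
  have hzero : (0 : Ω → ℝ) ∈ Gge0 Ω := ⟨⟨0, by simp⟩, fun ω => le_refl _⟩
  -- membership below / above P f B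
  have hmemL : ∀ α : ℝ, α < P f B → (B.indicator fun ω => f ω - α) ∈ Macc := by
    intro α hα
    rw [hMacc]
    right
    have ht : (B.indicator fun ω => f ω - α) ∈ LP P := by
      refine ⟨f, hf, B, hB, P f B - α, by linarith, ?_⟩
      exact congrArg _ (funext fun ω => by ring)
    exact Set.mem_add.mpr ⟨_, posi_mem ht, 0, hzero, add_zero _⟩
  have hmemR : ∀ β : ℝ, P f B < β → (B.indicator fun ω => β - f ω) ∈ Macc := by
    intro β hβ
    rw [hMacc]
    right
    have ht : (B.indicator fun ω => β - f ω) ∈ LP P := by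
      refine ⟨fun ω => β - f ω, hGmb_sub β, B, hB, β - P f B, by linarith, ?_⟩
      rw [hPlin β]
      exact congrArg _ (funext fun ω => by ring)
    exact Set.mem_add.mpr ⟨_, posi_mem ht, 0, hzero, add_zero _⟩
  -- upper bound for the sup set
  have hub : ∀ α ∈ {α : ℝ | (B.indicator fun ω => f ω - α) ∈ Macc}, α ≤ P f B := by
    intro α hα
    by_contra hcon
    push_neg at hcon
    rw [hMacc] at hα
    rcases hα with ⟨_, hpos⟩ | hα
    · -- nonnegative case : f ≥ α on B, contradicting CC1
      have hle : α ≤ sInf (f '' B) := by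
        refine le_csInf (hB.image f) ?_
        rintro b ⟨ω, hω, rfl⟩
        have := hpos ω
        rw [Set.indicator_of_mem hω] at this
        linarith
      have := (hCC1 f hf B hB).1
      linarith
    · obtain ⟨u, hu, g0, hg0, hsum⟩ := Set.mem_add.mp hα
      set t := B.indicator (fun ω => α - f ω) with hts
      have ht : t ∈ LP P := by
        refine ⟨fun ω => α - f ω, hGmb_sub α, B, hB, α - P f B, by linarith, ?_⟩
        rw [hts, hPlin α]
        exact congrArg _ (funext fun ω => by ring)
      obtain ⟨ω, hω⟩ := posi_LP_pos P hASL (posi_add_mem hu ht)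
      have h1 : u ω + g0 ω = (B.indicator fun ω => f ω - α) ω := congrFun hsum ω
      have h2 : (u + t) ω = u ω + t ω := rfl
      have h3 : t ω = -((B.indicator fun ω => f ω - α) ω) := by
        by_cases hm : ω ∈ B
        · simp [hts, Set.indicator_of_mem hm]
        · simp [hts, Set.indicator_of_notMem hm]
      have h4 := hg0.2 ω
      rw [h2, h3] at hω
      linarith
  -- lower bound for the inf set
  have hlb : ∀ β ∈ {β : ℝ | (B.indicator fun ω => β - f ω) ∈ Macc}, P f B ≤ β := by
    intro β hβ
    by_contra hcon
    push_neg at hcon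
    rw [hMacc] at hβ
    rcases hβ with ⟨_, hpos⟩ | hβ
    · have hle : sSup (f '' B) ≤ β := by
        refine csSup_le (hB.image f) ?_
        rintro b ⟨ω, hω, rfl⟩
        have := hpos ω
        rw [Set.indicator_of_mem hω] at this
        linarith
      have := (hCC1 f hf B hB).2
      linarith
    · obtain ⟨u, hu, g0, hg0, hsum⟩ := Set.mem_add.mp hβ
      set t := B.indicator (fun ω => f ω - β) with hts
      have ht : t ∈ LP P := by
        refine ⟨f, hf, B, hB, P f B - β, by linarith, ?_⟩
        rw [hts]
        exact congrArg _ (funext fun ω => by ring)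
      obtain ⟨ω, hω⟩ := posi_LP_pos P hASL (posi_add_mem hu ht)
      have h1 : u ω + g0 ω = (B.indicator fun ω => β - f ω) ω := congrFun hsum ω
      have h2 : (u + t) ω = u ω + t ω := rfl
      have h3 : t ω = -((B.indicator fun ω => β - f ω) ω) := by
        by_cases hm : ω ∈ B
        · simp [hts, Set.indicator_of_mem hm]
        · simp [hts, Set.indicator_of_notMem hm]
      have h4 := hg0.2 ω
      rw [h2, h3] at hω
      linarith
  exact ⟨sSup_eq_of _ _ hmemL hub, (sInf_eq_of _ _ hmemR hlb).symm⟩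
end
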